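/- arXiv:1607.05468 — 5 statements merged into one kernel-verified Lean document; each statement's English description precedes it below -/
import Mathlib

section
/- Let R = K[x_1,...,x_k] be graded by weights W = [d_1,...,d_k] ∈ ℕ_+^k and let d = lcm(d_1,...,d_k). Then there exists a unique quasi-polynomial of period d, i.e. a list of polynomials P_0,...,P_{d-1} ∈ ℚ[x], such that for all sufficiently large n, the Hilbert function H_R^W(n) = dim_K of the n-th graded component equals P_i(n), where i ≡ n mod d. -/
/-!
Splitting off the first variable, of weight `c = w 0`, gives `H_{k+1}(n + c) = H_{k+1}(n) + H'_k(n + c)`,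
where `H'_k` is the Hilbert function of the remaining weights. As `c ∣ d`, telescoping `d / c` such
steps writes `H_{k+1}(n + d) - H_{k+1}(n)` as a finite sum of shifts of `H'_k`, which by induction is
eventually a quasi-polynomial of period `d`. Along each residue class `n = r + m d` the function
`H_{k+1}` therefore has first differences that are eventually polynomial in `m`, so it is itself
eventually polynomial in `m`: polynomial antidifferences exist, by the Bernoulli polynomials.
Uniqueness holds because each residue class is infinite and a polynomial is determined by its
values on an infinite set.
-/

/-- The Hilbert function of `K[x_1,…,x_k]` graded by weights `w`:
the number of `(a_1,…,a_k) ∈ ℕ^k` with `∑ aᵢ dᵢ = n`. -/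
noncomputable def hilbFn (k : ℕ) (w : Fin k → ℕ) (n : ℕ) : ℕ :=
  Nat.card {a : Fin k → ℕ // ∑ i, a i * w i = n}

open Polynomial Filter

theorem Polynomial.exists_eval_add_one_sub_eval (p : ℚ[X]) :
    ∃ s : ℚ[X], ∀ x : ℚ, s.eval (x + 1) - s.eval x = p.eval x := by
  induction p using Polynomial.induction_on' with
  | add p q hp hq =>
    obtain ⟨s, hs⟩ := hp
    obtain ⟨t, ht⟩ := hq
    exact ⟨s + t, fun x => by simp only [eval_add, ← hs, ← ht]; ring⟩
  | monomial i a =>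
    refine ⟨C (a / (i + 1)) * bernoulli (i + 1), fun x => ?_⟩
    simp only [add_comm x 1, eval_mul, eval_C, bernoulli_eval_one_add, Nat.cast_add, Nat.cast_one,
      add_tsub_cancel_right, eval_monomial]
    field_simp
    ring

theorem Polynomial.eq_of_frequently_eval_natCast_eq {R : Type*} [CommRing R] [IsDomain R]
    [CharZero R] {p q : R[X]} (h : ∃ᶠ n : ℕ in atTop, p.eval (n : R) = q.eval (n : R)) :
    p = q :=
  eq_of_infinite_eval_eq p q <| ((Nat.frequently_atTop_iff_infinite.mp h).image
    Nat.cast_injective.injOn).mono <| Set.image_subset_iff.mpr fun _ hn => hn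

theorem exists_eventually_eval_eq_of_add_one {u : ℕ → ℚ} {p : ℚ[X]}
    (h : ∀ᶠ m : ℕ in atTop, u (m + 1) = u m + p.eval (m : ℚ)) :
    ∃ q : ℚ[X], ∀ᶠ m : ℕ in atTop, q.eval (m : ℚ) = u m := by
  obtain ⟨s, hs⟩ := p.exists_eval_add_one_sub_eval
  obtain ⟨M, hM⟩ := eventually_atTop.mp h
  refine ⟨s + C (u M - s.eval (M : ℚ)), eventually_atTop.mpr ⟨M, fun m hm => ?_⟩⟩
  have hconst : u m - s.eval (m : ℚ) = u M - s.eval (M : ℚ) := by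
    induction m, hm using Nat.le_induction with
    | base => rfl
    | succ m hm ih => rw [← ih, hM m hm, Nat.cast_succ, ← hs]; ring
  rw [eval_add, eval_C, ← hconst]
  ring

theorem ZMod.frequently_natCast_eq {d : ℕ} [NeZero d] (z : ZMod d) :
    ∃ᶠ n : ℕ in atTop, (n : ZMod d) = z :=
  frequently_atTop.mpr fun a => ⟨z.val + a * d,
    le_add_left (Nat.le_mul_of_pos_right a (NeZero.pos d)), by simp⟩

def IsEventuallyQuasiPoly (d : ℕ) (f : ℕ → ℚ) : Prop :=
  ∃ P : ZMod d → ℚ[X], ∀ᶠ n : ℕ in atTop, (P n).eval (n : ℚ) = f n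

namespace IsEventuallyQuasiPoly

variable {d : ℕ} {f g : ℕ → ℚ}

theorem congr (hf : IsEventuallyQuasiPoly d f) (hfg : f =ᶠ[atTop] g) :
    IsEventuallyQuasiPoly d g :=
  let ⟨P, hP⟩ := hf
  ⟨P, (hP.and hfg).mono fun _ h => h.1.trans h.2⟩

theorem zero : IsEventuallyQuasiPoly d 0 :=
  ⟨0, .of_forall fun _ => by simp⟩

theorem add (hf : IsEventuallyQuasiPoly d f) (hg : IsEventuallyQuasiPoly d g) :
    IsEventuallyQuasiPoly d (f + g) := by
  obtain ⟨P, hP⟩ := hf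
  obtain ⟨Q, hQ⟩ := hg
  exact ⟨P + Q, (hP.and hQ).mono fun n h => by simp [h.1, h.2]⟩

theorem finset_sum {ι : Type*} (s : Finset ι) {f : ι → ℕ → ℚ}
    (hf : ∀ i ∈ s, IsEventuallyQuasiPoly d (f i)) :
    IsEventuallyQuasiPoly d (∑ i ∈ s, f i) := by
  classical
  induction s using Finset.induction_on with
  | empty => simpa using zero
  | insert i s hi ih =>
    rw [Finset.sum_insert hi]
    exact (hf i (s.mem_insert_self i)).add (ih fun j hj => hf j (Finset.mem_insert_of_mem hj))

theorem comp_add (hf : IsEventuallyQuasiPoly d f) (c : ℕ) :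
    IsEventuallyQuasiPoly d (fun n => f (n + c)) := by
  obtain ⟨P, hP⟩ := hf
  refine ⟨fun z => (P (z + c)).comp (X + C (c : ℚ)), ?_⟩
  filter_upwards [(tendsto_add_atTop_nat c).eventually hP] with n hn
  simpa using hn

theorem of_residues (hd : 0 < d)
    (h : ∀ z : ZMod d, ∃ q : ℚ[X], ∀ᶠ m : ℕ in atTop, q.eval (m : ℚ) = f (z.val + m * d)) :
    IsEventuallyQuasiPoly d f := by
  have : NeZero d := ⟨hd.ne'⟩
  choose q hq using h
  refine ⟨fun z => (q z).comp (C (d : ℚ)⁻¹ * (X - C (z.val : ℚ))), ?_⟩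
  have hdiv : ∀ᶠ n : ℕ in atTop, ∀ z, (q z).eval ((n / d : ℕ) : ℚ) = f (z.val + n / d * d) :=
    (Nat.tendsto_div_const_atTop hd.ne').eventually (eventually_all.mpr hq)
  filter_upwards [hdiv] with n hn
  have hsplit : (n : ZMod d).val + n / d * d = n := by
    rw [ZMod.val_natCast, Nat.mod_add_div']
  have hd' : (d : ℚ) ≠ 0 := by exact_mod_cast hd.ne'
  have harg : (d : ℚ)⁻¹ * (n - (n : ZMod d).val) = (n / d : ℕ) := by
    rw [inv_mul_eq_iff_eq_mul₀ hd', sub_eq_iff_eq_add', mul_comm]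
    exact_mod_cast hsplit.symm
  simp only [eval_comp, eval_mul, eval_C, eval_sub, eval_X, harg]
  rw [hn, hsplit]

theorem of_add_period (hd : 0 < d) (hg : IsEventuallyQuasiPoly d g)
    (hf : ∀ᶠ n : ℕ in atTop, f (n + d) = f n + g n) : IsEventuallyQuasiPoly d f := by
  have : NeZero d := ⟨hd.ne'⟩
  obtain ⟨Q, hQ⟩ := hg
  refine of_residues hd fun z => exists_eventually_eval_eq_of_add_one
    (p := (Q z).comp (C (z.val : ℚ) + X * C (d : ℚ))) ?_
  have hlin : Tendsto (fun m : ℕ => z.val + m * d) atTop atTop :=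
    tendsto_atTop_mono (fun m => le_add_left (Nat.le_mul_of_pos_right m hd)) tendsto_id
  filter_upwards [hlin.eventually hf, hlin.eventually hQ] with m hfm hQm
  simp only [Nat.cast_add, Nat.cast_mul, ZMod.natCast_self, mul_zero, add_zero,
    ZMod.natCast_zmod_val] at hQm
  simp only [eval_comp, eval_add, eval_mul, eval_C, eval_X]
  rw [add_one_mul, ← add_assoc, hfm, ← hQm]

theorem of_add_of_dvd {c : ℕ} (hd : 0 < d) (hcd : c ∣ d) (hg : IsEventuallyQuasiPoly d g)
    (hf : ∀ᶠ n : ℕ in atTop, f (n + c) = f n + g n) : IsEventuallyQuasiPoly d f := by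
  obtain ⟨e, rfl⟩ := hcd
  obtain ⟨N, hN⟩ := eventually_atTop.mp hf
  have htel : ∀ n ≥ N, ∀ t, f (n + c * t) = f n + ∑ s ∈ Finset.range t, g (n + c * s) := by
    intro n hn t
    induction t with
    | zero => simp
    | succ t ih =>
      rw [Finset.sum_range_succ, ← add_assoc, ← ih, mul_add_one, ← add_assoc, hN _ (by omega)]
  refine of_add_period hd (g := ∑ s ∈ Finset.range e, fun n => g (n + c * s))
    (finset_sum _ fun s _ => hg.comp_add _) (eventually_atTop.mpr ⟨N, fun n hn => ?_⟩)
  simp [htel n hn e]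

end IsEventuallyQuasiPoly

theorem quasiPoly_eq_of_eventually_eval_eq {d : ℕ} [NeZero d] {P Q : ZMod d → ℚ[X]}
    (h : ∀ᶠ n : ℕ in atTop, (P n).eval (n : ℚ) = (Q n).eval (n : ℚ)) : P = Q :=
  funext fun z => eq_of_frequently_eval_natCast_eq <|
    ((ZMod.frequently_natCast_eq z).and_eventually h).mono fun _ ⟨hz, hn⟩ => hz ▸ hn

theorem finite_sum_mul_eq {k : ℕ} {w : Fin k → ℕ} (hw : ∀ i, 0 < w i) (n : ℕ) :
    Finite {a : Fin k → ℕ // ∑ i, a i * w i = n} := by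
  have hbound (a : {a : Fin k → ℕ // ∑ i, a i * w i = n}) (i : Fin k) : a.1 i < n + 1 := by
    have := Finset.single_le_sum (f := fun j => a.1 j * w j) (fun j _ => Nat.zero_le _)
      (Finset.mem_univ i)
    have := Nat.le_mul_of_pos_right (a.1 i) (hw i)
    have := a.2
    omega
  exact Finite.of_injective (β := Fin k → Fin (n + 1)) (fun a i => ⟨a.1 i, hbound a i⟩)
    fun a b h => Subtype.ext <| funext fun i => congrArg Fin.val (congrFun h i)

def Equiv.subtypeNatProdEquivSum {β : Type*} (Q : ℕ → β → Prop) :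
    {p : ℕ × β // Q p.1 p.2} ≃ {b : β // Q 0 b} ⊕ {p : ℕ × β // Q (p.1 + 1) p.2} where
  toFun
    | ⟨(0, b), h⟩ => .inl ⟨b, h⟩
    | ⟨(j + 1, b), h⟩ => .inr ⟨(j, b), h⟩
  invFun
    | .inl ⟨b, h⟩ => ⟨(0, b), h⟩
    | .inr ⟨(j, b), h⟩ => ⟨(j + 1, b), h⟩
  left_inv := by rintro ⟨⟨_ | j, b⟩, h⟩ <;> rfl
  right_inv := by rintro (⟨b, h⟩ | ⟨⟨j, b⟩, h⟩) <;> rfl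

theorem hilbFn_zero_of_ne_zero (w : Fin 0 → ℕ) {n : ℕ} (hn : n ≠ 0) : hilbFn 0 w n = 0 := by
  have : IsEmpty {a : Fin 0 → ℕ // ∑ i, a i * w i = n} :=
    ⟨fun ⟨_, ha⟩ => hn (by simpa using ha.symm)⟩
  exact Nat.card_of_isEmpty

theorem hilbFn_succ_add {k : ℕ} {w : Fin (k + 1) → ℕ} (hw : ∀ i, 0 < w i) (n : ℕ) :
    hilbFn (k + 1) w (n + w 0) = hilbFn k (fun i => w i.succ) (n + w 0) + hilbFn (k + 1) w n := by
  let split (m : ℕ) : {a : Fin (k + 1) → ℕ // ∑ i, a i * w i = m} ≃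
      {p : ℕ × (Fin k → ℕ) // p.1 * w 0 + ∑ i, p.2 i * w i.succ = m} :=
    (Fin.consEquiv fun _ => ℕ).symm.subtypeEquiv fun a => by simp [Fin.sum_univ_succ, Fin.tail]
  have e : {a : Fin (k + 1) → ℕ // ∑ i, a i * w i = n + w 0} ≃
      {b : Fin k → ℕ // ∑ i, b i * w i.succ = n + w 0} ⊕
      {a : Fin (k + 1) → ℕ // ∑ i, a i * w i = n} :=
    (split _).trans <|
      (Equiv.subtypeNatProdEquivSum fun j b => j * w 0 + ∑ i, b i * w i.succ = n + w 0).trans <|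
      Equiv.sumCongr (Equiv.subtypeEquivRight fun b => by simp)
      ((Equiv.subtypeEquivRight fun p => by rw [add_one_mul]; omega).trans (split n).symm)
  have := finite_sum_mul_eq (fun i => hw i.succ) (n + w 0)
  have := finite_sum_mul_eq hw n
  rw [hilbFn, Nat.card_congr e, Nat.card_sum, hilbFn, hilbFn]

theorem isEventuallyQuasiPoly_hilbFn {d : ℕ} (hd : 0 < d) :
    ∀ (k : ℕ) (w : Fin k → ℕ), (∀ i, w i ∣ d) →
      IsEventuallyQuasiPoly d (fun n => (hilbFn k w n : ℚ))
  | 0, w, _ => IsEventuallyQuasiPoly.zero.congr <| eventually_atTop.mpr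
      ⟨1, fun n hn => by simp [hilbFn_zero_of_ne_zero w (Nat.one_le_iff_ne_zero.mp hn)]⟩
  | k + 1, w, hdvd => by
    have hw i : 0 < w i := Nat.pos_of_dvd_of_pos (hdvd i) hd
    refine IsEventuallyQuasiPoly.of_add_of_dvd hd (hdvd 0)
      ((isEventuallyQuasiPoly_hilbFn hd k _ fun i => hdvd i.succ).comp_add (w 0))
      (.of_forall fun n => ?_)
    rw [hilbFn_succ_add hw n, Nat.cast_add, add_comm]

theorem stmt0 (k : ℕ) (w : Fin k → ℕ) (hw : ∀ i, 0 < w i) :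
    ∃! P : ZMod (Finset.univ.lcm w) → Polynomial ℚ,
      ∃ N : ℕ, ∀ n : ℕ, N ≤ n →
        (P (n : ZMod (Finset.univ.lcm w))).eval (n : ℚ) = hilbFn k w n := by
  have hd : 0 < Finset.univ.lcm w :=
    Nat.pos_of_ne_zero fun h => by
      obtain ⟨i, -, hi⟩ := Finset.lcm_eq_zero_iff.mp h
      exact (hw i).ne' hi
  have : NeZero (Finset.univ.lcm w) := ⟨hd.ne'⟩
  obtain ⟨P, hP⟩ :=
    isEventuallyQuasiPoly_hilbFn hd k w fun i => Finset.dvd_lcm (Finset.mem_univ i)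
  refine ⟨P, eventually_atTop.mp hP, fun Q hQ => quasiPoly_eq_of_eventually_eval_eq ?_⟩
  filter_upwards [eventually_atTop.mpr hQ, hP] with n hQn hPn
  rw [hQn, hPn]
end

section
/- Let d_1,...,d_k be positive integers, d = lcm(d_1,...,d_k), and for each s set M_s = {d/d_s, 2·d/d_s, ..., (d_s−1)·d/d_s}. Then for any subset {j_1,...,j_r} ⊆ {1,...,k}, writing g = gcd(d_{j_1},...,d_{j_r}), the intersection M_{j_1} ∩ ··· ∩ M_{j_r} equals {d/g, 2·d/g, ..., (g−1)·d/g}. -/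
/-!
Write `D = lcm d`. For `a ∣ D`, the multiples `t * (D / a)` with `0 < t < a` are exactly the
multiples of `D / a` strictly between `0` and `D`, and `D / a ∣ x ↔ D ∣ a * x`. Hence `x` lies
in every `M s` with `s ∈ J` iff `0 < x < D` and `D ∣ d s * x` for all `s ∈ J`, i.e.
`D ∣ gcd (d s * x) = g * x`, which says that `x` is of the same shape for `a = g`.
-/

theorem exists_eq_mul_div_iff {n a : ℕ} (hn : 0 < n) (ha : a ∣ n) (x : ℕ) :
    (∃ t, 1 ≤ t ∧ t < a ∧ x = t * (n / a)) ↔ n / a ∣ x ∧ 0 < x ∧ x < n := by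
  have hapos : 0 < a := Nat.pos_of_dvd_of_pos ha hn
  have hq : 0 < n / a := Nat.div_pos (Nat.le_of_dvd hn ha) hapos
  have hn_eq : a * (n / a) = n := Nat.mul_div_cancel' ha
  constructor
  · rintro ⟨t, ht1, hta, rfl⟩
    refine ⟨dvd_mul_left _ _, Nat.mul_pos ht1 hq, ?_⟩
    calc t * (n / a) < a * (n / a) := Nat.mul_lt_mul_of_pos_right hta hq
      _ = n := hn_eq
  · rintro ⟨⟨t, rfl⟩, hx0, hxn⟩
    refine ⟨t, Nat.pos_of_mul_pos_left hx0, ?_, mul_comm _ _⟩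
    by_contra! hat
    have : a * (n / a) ≤ t * (n / a) := Nat.mul_le_mul_right _ hat
    rw [hn_eq, mul_comm] at this
    omega

theorem Finset.dvd_gcd_mul_right_iff {ι α : Type*} [CommMonoidWithZero α] [NormalizedGCDMonoid α]
    (s : Finset ι) (f : ι → α) (a b : α) :
    a ∣ s.gcd f * b ↔ ∀ i ∈ s, a ∣ f i * b := by
  rw [← (s.gcd_mul_right' f b).dvd_iff_dvd_right, Finset.dvd_gcd_iff]

theorem Finset.forall_div_dvd_iff_div_gcd_dvd {ι : Type*} {s : Finset ι} (hs : s.Nonempty)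
    {d : ι → ℕ} (hd : ∀ i ∈ s, 0 < d i) {n : ℕ} (hdn : ∀ i ∈ s, d i ∣ n) (x : ℕ) :
    (∀ i ∈ s, n / d i ∣ x) ↔ n / s.gcd d ∣ x := by
  obtain ⟨i₀, hi₀⟩ := hs
  have hg_dvd : s.gcd d ∣ d i₀ := Finset.gcd_dvd hi₀
  have hg_pos : 0 < s.gcd d := Nat.pos_of_dvd_of_pos hg_dvd (hd i₀ hi₀)
  rw [Nat.div_dvd_iff_dvd_mul (hg_dvd.trans (hdn i₀ hi₀)) hg_pos,
    Finset.dvd_gcd_mul_right_iff]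
  exact forall₂_congr fun i hi => Nat.div_dvd_iff_dvd_mul (hdn i hi) (hd i hi)

theorem stmt3 (k : ℕ) (d : Fin k → ℕ) (hd : ∀ i, 0 < d i)
    (M : Fin k → Set ℕ)
    (hM : ∀ s, M s =
      {x | ∃ t, 1 ≤ t ∧ t < d s ∧ x = t * (Finset.univ.lcm d / d s)})
    (J : Finset (Fin k)) (hJ : J.Nonempty) :
    ⋂ s ∈ J, M s =
      {x | ∃ t, 1 ≤ t ∧ t < J.gcd d ∧ x = t * (Finset.univ.lcm d / J.gcd d)} := by
  set D := Finset.univ.lcm d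
  have hdD : ∀ s, d s ∣ D := fun s => Finset.dvd_lcm (Finset.mem_univ s)
  have hD : 0 < D := Nat.pos_of_ne_zero fun h0 => by
    obtain ⟨i, -, hi⟩ := Finset.lcm_eq_zero_iff.mp h0
    exact (hd i).ne' hi
  have hgD : J.gcd d ∣ D := by
    obtain ⟨s₀, hs₀⟩ := hJ
    exact (Finset.gcd_dvd hs₀).trans (hdD s₀)
  ext x
  simp only [Set.mem_iInter, hM, Set.mem_ofPred_eq, exists_eq_mul_div_iff hD (hdD _),
    exists_eq_mul_div_iff hD hgD, forall_and, hJ.forall_const,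
    Finset.forall_div_dvd_iff_div_gcd_dvd hJ (fun i _ => hd i) (fun i _ => hdD i)]
end

section
/- Let d_1,...,d_k be positive integers with gcd(d_1,...,d_k) = 1, d = lcm(d_1,...,d_k), δ = max{ |I| : I ⊆ {1,...,k}, gcd(d_i)_{i∈I} ≠ 1 }, M_s = {d/d_s, 2d/d_s,...,(d_s−1)d/d_s}, and T_r the set of elements p ∈ ⋃ M_i belonging to exactly r of the sets M_i. Then T_r = ∅ for all r with δ < r ≤ k. -/
/-! If `p` lies in every `M s` with `s ∈ J`, then `L / d s ∣ p`, i.e. `L ∣ p * d s`, for each such `s`,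
where `L = lcm d`. Hence `L ∣ p * gcd_{s ∈ J} d s`. Since `0 < p < L`, this gcd cannot be `1`, so `J`
is one of the index sets counted by `δ` and `|J| ≤ δ`. -/

theorem Finset.dvd_of_forall_dvd_mul_of_gcd_eq_one {ι α : Type*} [CommMonoidWithZero α]
    [NormalizedGCDMonoid α] {J : Finset ι} {f : ι → α} {a p : α} (h : ∀ s ∈ J, a ∣ p * f s)
    (hJ : J.gcd f = 1) : a ∣ p := by
  have hdvd : a ∣ J.gcd fun s ↦ p * f s := Finset.dvd_gcd h
  simpa [hJ] using (Finset.gcd_mul_left' J f p).dvd_iff_dvd_right.mp hdvd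

theorem Nat.not_dvd_mul_div_of_lt {L a t : ℕ} (hL : 0 < L) (ha : a ∣ L) (ht : 0 < t)
    (hta : t < a) : ¬L ∣ t * (L / a) := by
  have hquot : 0 < L / a := Nat.div_pos (Nat.le_of_dvd hL ha) (ht.trans hta)
  have hlt : t * (L / a) < L :=
    calc t * (L / a) < a * (L / a) := Nat.mul_lt_mul_of_pos_right hta hquot
      _ = L := Nat.mul_div_cancel' ha
  exact Nat.not_dvd_of_pos_of_lt (Nat.mul_pos ht hquot) hlt

theorem Finset.gcd_ne_one_of_forall_eq_mul_div {ι : Type*} {d : ι → ℕ} {L p : ℕ} {J : Finset ι}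
    (hL : 0 < L) (hdL : ∀ s ∈ J, d s ∣ L) (hJ : J.Nonempty)
    (hp : ∀ s ∈ J, ∃ t, 1 ≤ t ∧ t < d s ∧ p = t * (L / d s)) : J.gcd d ≠ 1 := by
  intro hgcd
  have hLp : L ∣ p := by
    refine Finset.dvd_of_forall_dvd_mul_of_gcd_eq_one (fun s hs ↦ ?_) hgcd
    obtain ⟨t, -, hts, rfl⟩ := hp s hs
    rw [mul_comm, ← Nat.div_dvd_iff_dvd_mul (hdL s hs) (by omega)]
    exact Dvd.intro_left t rfl
  obtain ⟨s, hs⟩ := hJ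
  obtain ⟨t, ht, hts, rfl⟩ := hp s hs
  exact Nat.not_dvd_mul_div_of_lt hL (hdL s hs) ht hts hLp

theorem stmt4_general (k : ℕ) (d : Fin k → ℕ) (hd : ∀ i, 0 < d i)
    (δ : ℕ)
    (hδ : IsGreatest {m | ∃ I : Finset (Fin k), I.gcd d ≠ 1 ∧ I.card = m} δ)
    (M : Fin k → Set ℕ)
    (hM : ∀ s, M s =
      {x | ∃ t, 1 ≤ t ∧ t < d s ∧ x = t * (Finset.univ.lcm d / d s)})
    (r : ℕ) (hr1 : δ < r) :
    {p : ℕ | ∃ J : Finset (Fin k), J.card = r ∧ ∀ s ∈ J, p ∈ M s} = ∅ := by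
  refine Set.eq_empty_of_forall_notMem fun p ⟨J, hJcard, hJ⟩ ↦ ?_
  have hL : 0 < Finset.univ.lcm d :=
    Nat.pos_of_ne_zero fun h ↦ by
      obtain ⟨i, -, hi⟩ := Finset.lcm_eq_zero_iff.mp h
      exact (hd i).ne' hi
  have hJne : J.Nonempty := Finset.card_pos.mp (by omega)
  have hgcd : J.gcd d ≠ 1 :=
    Finset.gcd_ne_one_of_forall_eq_mul_div hL (fun s _ ↦ Finset.dvd_lcm (Finset.mem_univ s)) hJne
      fun s hs ↦ by simpa [hM s] using hJ s hs
  have : r ≤ δ := hδ.2 ⟨J, hgcd, hJcard⟩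
  omega

theorem stmt4 (k : ℕ) (d : Fin k → ℕ) (hd : ∀ i, 0 < d i)
    (hgcd : Finset.univ.gcd d = 1)
    (δ : ℕ)
    (hδ : IsGreatest {m | ∃ I : Finset (Fin k), I.gcd d ≠ 1 ∧ I.card = m} δ)
    (M : Fin k → Set ℕ)
    (hM : ∀ s, M s =
      {x | ∃ t, 1 ≤ t ∧ t < d s ∧ x = t * (Finset.univ.lcm d / d s)})
    (r : ℕ) (hr1 : δ < r) (hr2 : r ≤ k) :
    {p : ℕ | ∃ J : Finset (Fin k), J.card = r ∧ ∀ s ∈ J, p ∈ M s} = ∅ :=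
  stmt4_general k d hd δ hδ M hM r hr1
end

section
/- In the partial fraction decomposition 1/∏_{i=1}^k(1−t^{d_i}) with gcd(d_1,...,d_k) = 1, the coefficient A_{k−1} of 1/(1−t)^{k−1} equals (Σ_{i=1}^k d_i − k) / (2·∏_{i=1}^k d_i). -/
/-!
Write `1 - t ^ dᵢ = (1 - t) gᵢ(t)` with `gᵢ(t) = 1 + t + ⋯ + t ^ (dᵢ - 1)` and `G = ∏ gᵢ`. After
multiplying by `(1 - t) ^ (k - 1)` the expression becomes `(1 / G(t) - 1 / G(1)) / (1 - t)`, whose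
limit at `1` is `-(1 / G)'(1) = G'(1) / G(1) ^ 2`. Since `gᵢ(1) = dᵢ` and `gᵢ'(1) = dᵢ (dᵢ - 1) / 2`,
the product rule gives `G'(1) = (∏ dᵢ) · ∑ (dᵢ - 1) / 2`.
-/

open Filter Topology Finset

lemma hasDerivAt_geom_sum_one (n : ℕ) :
    HasDerivAt (fun t : ℝ => ∑ j ∈ range n, t ^ j) (n * (n - 1) / 2) 1 := by
  refine (HasDerivAt.fun_sum fun j _ => hasDerivAt_pow j (1 : ℝ)).congr_deriv ?_
  simp only [one_pow, mul_one]
  induction n with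
  | zero => simp
  | succ n ih => rw [sum_range_succ, ih]; push_cast; ring

lemma hasDerivAt_prod_geom_sum_one {ι : Type*} [Fintype ι] (d : ι → ℕ) :
    HasDerivAt (fun t : ℝ => ∏ i, ∑ j ∈ range (d i), t ^ j)
      ((∏ i, (d i : ℝ)) * (∑ i, (d i : ℝ) - Fintype.card ι) / 2) 1 := by
  classical
  refine (HasDerivAt.fun_finsetProd fun i _ => hasDerivAt_geom_sum_one (d i)).congr_deriv ?_
  have hterm : ∀ i, (∏ j ∈ univ.erase i, ∑ l ∈ range (d j), (1 : ℝ) ^ l) •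
      ((d i : ℝ) * (d i - 1) / 2) = (∏ j, (d j : ℝ)) * (d i - 1) / 2 := by
    intro i
    simp only [one_pow, sum_const, card_range, nsmul_eq_mul, mul_one, smul_eq_mul]
    rw [← prod_erase_mul univ (fun j => (d j : ℝ)) (mem_univ i)]
    ring
  rw [sum_congr rfl fun i _ => hterm i, ← sum_div, ← mul_sum, sum_sub_distrib]
  simp

lemma prod_one_sub_pow_eq {R ι : Type*} [CommRing R] (s : Finset ι) (d : ι → ℕ) (t : R) :
    ∏ i ∈ s, (1 - t ^ d i) = (1 - t) ^ #s * ∏ i ∈ s, ∑ j ∈ range (d i), t ^ j := by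
  simp only [← mul_neg_geom_sum, prod_mul_distrib, prod_const]

lemma tendsto_one_sub_inv_mul_inv_sub {G : ℝ → ℝ} {G' : ℝ} (hG : HasDerivAt G G' 1)
    (h1 : G 1 ≠ 0) :
    Tendsto (fun t => (1 - t)⁻¹ * ((G t)⁻¹ - (G 1)⁻¹)) (𝓝[≠] 1) (𝓝 (G' / G 1 ^ 2)) := by
  convert (hasDerivAt_iff_tendsto_slope.mp (hG.inv h1)).neg using 2 with t
  · rw [slope_def_field, Pi.inv_apply, Pi.inv_apply, ← neg_sub 1 t, div_neg]
    ring
  · ring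

theorem stmt15_general (k : ℕ) (d : Fin k → ℕ) (hd : ∀ i, 0 < d i) :
    Filter.Tendsto
      (fun t : ℝ => (1 - t) ^ (k - 1) *
        (1 / ∏ i, (1 - t ^ (d i)) - (1 / ∏ i, (d i : ℝ)) / (1 - t) ^ k))
      (nhdsWithin 1 {1}ᶜ)
      (nhds ((∑ i, (d i : ℝ) - k) / (2 * ∏ i, (d i : ℝ)))) := by
  obtain _ | m := k
  · simp
  have hP : ∏ i, (d i : ℝ) ≠ 0 := prod_ne_zero_iff.mpr fun i _ => by exact_mod_cast (hd i).ne'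
  have hG1 : ∏ i, ∑ j ∈ range (d i), (1 : ℝ) ^ j = ∏ i, (d i : ℝ) := by simp
  have hlim := tendsto_one_sub_inv_mul_inv_sub (hasDerivAt_prod_geom_sum_one d) (hG1 ▸ hP)
  rw [hG1, Fintype.card_fin] at hlim
  convert hlim.congr' ?_ using 2
  · field_simp
  filter_upwards [self_mem_nhdsWithin] with t (ht : t ≠ 1)
  have ht' : 1 - t ≠ 0 := sub_ne_zero.mpr ht.symm
  rw [prod_one_sub_pow_eq, card_univ, Fintype.card_fin, Nat.add_sub_cancel]
  field_simp
  ring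

theorem stmt15 (k : ℕ) (d : Fin k → ℕ) (hd : ∀ i, 0 < d i)
    (hgcd : Finset.univ.gcd d = 1) :
    Filter.Tendsto
      (fun t : ℝ => (1 - t) ^ (k - 1) *
        (1 / ∏ i, (1 - t ^ (d i)) - (1 / ∏ i, (d i : ℝ)) / (1 - t) ^ k))
      (nhdsWithin 1 {1}ᶜ)
      (nhds ((∑ i, (d i : ℝ) - k) / (2 * ∏ i, (d i : ℝ)))) :=
  stmt15_general k d hd
end

section
/- Let d_1,...,d_k be positive integers with gcd 1, d = lcm(d_i), ζ a primitive d-th root of unity, and H(n) = #{α ∈ ℕ^k : Σ α_i d_i = n}. With T̃_i defined as the set of residues j mod d (1 ≤ j ≤ d−1) that lie in exactly i of the sets M_s = {d/d_s,...,(d_s−1)d/d_s} for 1 ≤ i ≤ k−1, and T̃_k = {0}, we have for all n ≥ 1: H(n) = (1/n)·Σ_{r=1}^n [Σ_{i=1}^k i·(Σ_{j ∈ T̃_i} ζ^{jr})]·H(n−r). -/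
/-!
Summing the total weight `∑ s, a s * d s = n` over all solutions `a` of weight `n`, and counting
`a s` as the number of multiples `r` of `d s` with `r ≤ a s * d s`, gives
`n H(n) = ∑ r, σ(r) H(n - r)` with `σ(r) = ∑_{d_s ∣ r} d_s`: removing `r / d s` parts of size `d s`
is a bijection onto the solutions of weight `n - r`. On the other side, `ζ^(d/d_s)` is a primitive
`d_s`-th root of unity, so `1 + ∑_{j ∈ M_s} ζ^(jr) = d_s [d_s ∣ r]`. Summing over `s` and grouping
the residues `j` by the number of sets `M_s` containing them gives the coefficient in the
statement; since `gcd d_s = 1`, no `0 < j < d` lies in all `k` sets, so multiplicity `k` only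
occurs for `j = 0`.
-/

open Finset

lemma Pi.single_le_iff {ι : Type*} [DecidableEq ι] {s : ι} {m : ℕ} {b : ι → ℕ} :
    Pi.single s m ≤ b ↔ m ≤ b s := by
  refine ⟨fun h => by simpa using h s, fun h i => ?_⟩
  rcases eq_or_ne i s with rfl | hi
  · simpa using h
  · simp [hi]

namespace WeightedPartition

variable {ι : Type*} [Fintype ι] {d : ι → ℕ}

lemma mul_le_of_sum_mul_eq {a : ι → ℕ} {n : ℕ} (h : ∑ i, a i * d i = n) (s : ι) :
    a s * d s ≤ n :=
  h ▸ single_le_sum (f := fun i => a i * d i) (fun _ _ => Nat.zero_le _) (mem_univ s)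

lemma sum_add_mul (a b : ι → ℕ) :
    ∑ i, (a + b) i * d i = ∑ i, a i * d i + ∑ i, b i * d i := by
  simp only [Pi.add_apply, add_mul, sum_add_distrib]

variable [DecidableEq ι]

def solutions (d : ι → ℕ) (n : ℕ) : Finset (ι → ℕ) :=
  {a ∈ Fintype.piFinset fun _ => range (n + 1) | ∑ i, a i * d i = n}

lemma mem_solutions (hd : ∀ i, 0 < d i) {n : ℕ} {a : ι → ℕ} :
    a ∈ solutions d n ↔ ∑ i, a i * d i = n := by
  refine ⟨fun h => (mem_filter.mp h).2,
    fun h => mem_filter.mpr ⟨Fintype.mem_piFinset.mpr fun i => ?_, h⟩⟩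
  rw [mem_range, Nat.lt_succ_iff]
  exact (Nat.le_mul_of_pos_right _ (hd i)).trans (mul_le_of_sum_mul_eq h i)

lemma card_solutions (hd : ∀ i, 0 < d i) (n : ℕ) :
    #(solutions d n) = Nat.card {a : ι → ℕ // ∑ i, a i * d i = n} := by
  rw [← Nat.card_eq_finsetCard]
  exact Nat.card_congr (Equiv.subtypeEquivRight fun _ => mem_solutions hd)

lemma sum_single_mul (s : ι) (m : ℕ) :
    ∑ i, (Pi.single s m : ι → ℕ) i * d i = m * d s := by
  simp [Pi.single_apply]

lemma card_filter_le_mul_coord (hd : ∀ i, 0 < d i) {s : ι} {r n : ℕ} (hdr : d s ∣ r)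
    (hrn : r ≤ n) :
    #{a ∈ solutions d n | r ≤ a s * d s} = #(solutions d (n - r)) := by
  obtain ⟨m, rfl⟩ := hdr
  have hle {b : ι → ℕ} : d s * m ≤ b s * d s ↔ Pi.single s m ≤ b := by
    rw [Pi.single_le_iff, mul_comm, Nat.mul_le_mul_right_iff (hd s)]
  symm
  refine card_nbij' (· + Pi.single s m) (· - Pi.single s m) (fun a ha => ?_) (fun b hb => ?_)
    (fun a _ => add_tsub_cancel_right a _) (fun b hb => tsub_add_cancel_of_le ?_)
  · rw [mem_coe, mem_solutions hd] at ha
    simp only [coe_filter, Set.mem_ofPred_eq, mem_solutions hd, sum_add_mul, ha, sum_single_mul,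
      hle]
    exact ⟨by rw [mul_comm m]; omega, le_add_self⟩
  · simp only [coe_filter, Set.mem_ofPred_eq, mem_solutions hd, hle] at hb
    have hsum := sum_add_mul (d := d) (b - Pi.single s m) (Pi.single s m)
    rw [tsub_add_cancel_of_le hb.2, hb.1, sum_single_mul, mul_comm m] at hsum
    rw [mem_coe, mem_solutions hd]
    beta_reduce at hsum ⊢
    omega
  · simp only [coe_filter, Set.mem_ofPred_eq, hle] at hb
    exact hb.2

lemma coord_eq_card_filter_dvd {a : ι → ℕ} {n : ℕ} (hd : ∀ i, 0 < d i)
    (ha : a ∈ solutions d n) (s : ι) :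
    a s = #{r ∈ Icc 1 n | d s ∣ r ∧ r ≤ a s * d s} := by
  have hn := mul_le_of_sum_mul_eq ((mem_solutions hd).mp ha) s
  have : {r ∈ Icc 1 n | d s ∣ r ∧ r ≤ a s * d s} = {r ∈ Ioc 0 (a s * d s) | d s ∣ r} := by
    ext r
    simp only [mem_filter, mem_Icc, mem_Ioc]
    omega
  rw [this, Nat.Ioc_filter_dvd_card_eq_div, Nat.mul_div_cancel _ (hd s)]

theorem mul_card_solutions (hd : ∀ i, 0 < d i) (n : ℕ) :
    n * #(solutions d n) =
      ∑ r ∈ Icc 1 n, (∑ s, if d s ∣ r then d s else 0) * #(solutions d (n - r)) := by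
  calc n * #(solutions d n) = ∑ a ∈ solutions d n, ∑ s, d s * a s := by
        rw [mul_comm, ← smul_eq_mul, ← sum_const]
        exact sum_congr rfl fun a ha => by
          rw [← (mem_solutions hd).mp ha]; simp only [mul_comm (d _)]
    _ = ∑ a ∈ solutions d n, ∑ s, ∑ r ∈ Icc 1 n,
          if d s ∣ r ∧ r ≤ a s * d s then d s else 0 := by
        refine sum_congr rfl fun a ha => sum_congr rfl fun s _ => ?_
        rw [← sum_filter, sum_const, smul_eq_mul, mul_comm, ← coord_eq_card_filter_dvd hd ha]
    _ = ∑ r ∈ Icc 1 n, ∑ s, ∑ a ∈ solutions d n,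
          if d s ∣ r ∧ r ≤ a s * d s then d s else 0 := by
        rw [sum_comm]
        conv_lhs => enter [2, s]; rw [sum_comm]
        rw [sum_comm]
    _ = ∑ r ∈ Icc 1 n, ∑ s, if d s ∣ r then d s * #{a ∈ solutions d n | r ≤ a s * d s}
          else 0 := by
        refine sum_congr rfl fun r _ => sum_congr rfl fun s _ => ?_
        split_ifs with h
        · simp only [h, true_and, ← sum_filter, sum_const, smul_eq_mul, mul_comm]
        · simp only [h, false_and, if_false, sum_const_zero]
    _ = _ := by
        refine sum_congr rfl fun r hr => ?_
        rw [sum_mul]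
        refine sum_congr rfl fun s _ => ?_
        split_ifs with h
        · rw [card_filter_le_mul_coord hd h (mem_Icc.mp hr).2, mul_comm]
        · rw [zero_mul]

end WeightedPartition

lemma IsPrimitiveRoot.sum_range_pow_mul {R : Type*} [CommRing R] [IsDomain R] {ω : R} {e : ℕ}
    (hω : IsPrimitiveRoot ω e) (r : ℕ) :
    ∑ t ∈ range e, ω ^ (t * r) = if e ∣ r then (e : R) else 0 := by
  simp_rw [mul_comm _ r, pow_mul]
  split_ifs with h
  · simp [(hω.pow_eq_one_iff_dvd r).mpr h]
  · have hne : ω ^ r - 1 ≠ 0 := sub_ne_zero.mpr (mt (hω.pow_eq_one_iff_dvd r).mp h)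
    have hpow : (ω ^ r) ^ e = 1 := by rw [← pow_mul, mul_comm, pow_mul, hω.pow_eq_one, one_pow]
    have hgeom := geom_sum_mul (ω ^ r) e
    rw [hpow, sub_self] at hgeom
    exact (mul_eq_zero.mp hgeom).resolve_right hne

lemma IsPrimitiveRoot.one_add_sum_image_pow_mul {R : Type*} [CommRing R] [IsDomain R] {ζ : R}
    {L e : ℕ} (hζ : IsPrimitiveRoot ζ L) (hL : 0 < L) (he : e ∣ L) (r : ℕ) :
    1 + ∑ j ∈ (Icc 1 (e - 1)).image (· * (L / e)), ζ ^ (j * r) =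
      if e ∣ r then (e : R) else 0 := by
  have he0 : 0 < e := Nat.pos_of_dvd_of_pos he hL
  have hq : 0 < L / e := Nat.div_pos (Nat.le_of_dvd hL he) he0
  rw [sum_image fun x _ y _ h => Nat.eq_of_mul_eq_mul_right hq h,
    ← (hζ.pow hL (Nat.div_mul_cancel he).symm).sum_range_pow_mul r, range_eq_Ico,
    sum_eq_sum_Ico_succ_bot he0,
    show Ico (0 + 1) e = Icc 1 (e - 1) by ext; rw [mem_Ico, mem_Icc]; omega]
  simp only [zero_mul, pow_zero, ← pow_mul, mul_comm (L / e), mul_assoc]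

lemma Finset.sum_card_filter_mem_nsmul {α β M : Type*} [Fintype β] [DecidableEq α]
    [AddCommMonoid M] {A : Finset α} {S : β → Finset α} (hS : ∀ b, S b ⊆ A) (f : α → M) :
    ∑ a ∈ A, #{b | a ∈ S b} • f a = ∑ b, ∑ a ∈ S b, f a := by
  have hS' : ∀ b, ∑ a ∈ S b, f a = ∑ a ∈ A, if a ∈ S b then f a else 0 := fun b => by
    rw [sum_ite_mem, inter_eq_right.mpr (hS b)]
  simp_rw [hS', sum_comm (s := univ), ← sum_filter, sum_const]

lemma Finset.sum_Icc_nsmul_sum_fiber {α M : Type*} [AddCommMonoid M] {A : Finset α}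
    {c : α → ℕ} {K : ℕ} (hc : ∀ a ∈ A, c a ≤ K) (f : α → M) :
    ∑ i ∈ Icc 1 K, i • ∑ a ∈ A with c a = i, f a = ∑ a ∈ A, c a • f a := by
  have hsub : Icc 1 K ⊆ range (K + 1) := fun i hi => by
    rw [mem_Icc] at hi; rw [mem_range]; omega
  rw [sum_subset hsub fun i hi hi' => by
      rw [mem_range] at hi; rw [mem_Icc] at hi'; rw [show i = 0 by omega, zero_smul],
    ← sum_fiberwise_of_maps_to fun a ha => mem_range.mpr (Nat.lt_succ_of_le (hc a ha))]
  refine sum_congr rfl fun i _ => ?_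
  rw [smul_sum]
  exact sum_congr rfl fun a ha => by rw [(mem_filter.mp ha).2]

lemma Finset.dvd_of_forall_div_dvd {ι : Type*} {s : Finset ι} {d : ι → ℕ} (hgcd : s.gcd d = 1)
    {L j : ℕ} (hdL : ∀ i ∈ s, d i ∣ L) (hj : ∀ i ∈ s, L / d i ∣ j) : L ∣ j := by
  have h : ∀ i ∈ s, L ∣ j * d i := fun i hi => by
    obtain ⟨t, rfl⟩ := hj i hi
    exact ⟨t, by rw [mul_right_comm, Nat.div_mul_cancel (hdL i hi)]⟩
  simpa [gcd_mul_left, hgcd] using dvd_gcd h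

lemma Nat.image_mul_div_subset_Icc {L e : ℕ} (hL : 0 < L) (he : e ∣ L) :
    (Icc 1 (e - 1)).image (· * (L / e)) ⊆ Icc 1 (L - 1) := fun j hj => by
  obtain ⟨t, ht, rfl⟩ := mem_image.mp hj
  have hq : 0 < L / e := Nat.div_pos (Nat.le_of_dvd hL he) (Nat.pos_of_dvd_of_pos he hL)
  have ht' : 1 ≤ t ∧ t + 1 ≤ e := by simp only [mem_Icc] at ht; omega
  have : (t + 1) * (L / e) ≤ L :=
    (Nat.mul_le_mul_right _ ht'.2).trans_eq (Nat.mul_div_cancel' he)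
  rw [add_mul, one_mul] at this
  exact mem_Icc.mpr ⟨Nat.mul_pos ht'.1 hq, by omega⟩

lemma Finset.exists_notMem_image_mul_lcm_div {ι : Type*} {s : Finset ι} {d : ι → ℕ}
    (hgcd : s.gcd d = 1) {j : ℕ} (hj : j ∈ Icc 1 (s.lcm d - 1)) :
    ∃ i ∈ s, j ∉ (Icc 1 (d i - 1)).image (· * (s.lcm d / d i)) := by
  by_contra! hall
  have hdvd : s.lcm d ∣ j := dvd_of_forall_div_dvd hgcd (fun i hi => dvd_lcm hi) fun i hi => by
    obtain ⟨t, -, rfl⟩ := mem_image.mp (hall i hi)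
    exact dvd_mul_left _ _
  have hj' := mem_Icc.mp hj
  have := Nat.le_of_dvd hj'.1 hdvd
  omega

theorem sum_Icc_mul_sum_pow_eq_sum_ite_dvd {R : Type*} [CommRing R] [IsDomain R] (k : ℕ)
    (d : Fin k → ℕ) (hd : ∀ i, 0 < d i) (hgcd : univ.gcd d = 1) (ζ : R) (hζ : IsPrimitiveRoot ζ (univ.lcm d))
    (M : Fin k → Finset ℕ)
    (hM : ∀ s, M s = (Icc 1 (d s - 1)).image (· * (univ.lcm d / d s)))
    (T : ℕ → Finset ℕ)
    (hT : ∀ i, 1 ≤ i → i < k → T i =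
      {j ∈ Icc 1 (univ.lcm d - 1) | #{s | j ∈ M s} = i})
    (hTk : T k = {0}) (r : ℕ) :
    ∑ i ∈ Icc 1 k, (i : R) * ∑ j ∈ T i, ζ ^ (j * r) = ∑ s, if d s ∣ r then (d s : R) else 0 := by
  set L := univ.lcm d
  have hk : 0 < k := Nat.pos_of_ne_zero fun hk => by subst hk; simp at hgcd
  have hdL : ∀ s, d s ∣ L := fun s => dvd_lcm (mem_univ s)
  have hL : 0 < L := Nat.pos_of_ne_zero fun h => by
    obtain ⟨s, -, hs⟩ := Finset.lcm_eq_zero_iff.mp h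
    exact (hd s).ne' hs
  have hMsub : ∀ s, M s ⊆ Icc 1 (L - 1) := fun s =>
    hM s ▸ Nat.image_mul_div_subset_Icc hL (hdL s)
  have hmult : ∀ j ∈ Icc 1 (L - 1), #{s | j ∈ M s} ≤ k - 1 := fun j hj => by
    obtain ⟨s, -, hs⟩ := exists_notMem_image_mul_lcm_div hgcd hj
    have := card_lt_card <|
      (filter_ssubset (p := fun s => j ∈ M s)).mpr ⟨s, mem_univ s, (hM s).symm ▸ hs⟩
    rw [card_univ, Fintype.card_fin] at this
    omega
  calc ∑ i ∈ Icc 1 k, (i : R) * ∑ j ∈ T i, ζ ^ (j * r)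
      = ∑ i ∈ Icc 1 (k - 1), i • ∑ j ∈ Icc 1 (L - 1) with #{s | j ∈ M s} = i, ζ ^ (j * r)
          + k := by
        rw [show Icc 1 k = Icc 1 (k - 1 + 1) by rw [Nat.sub_add_cancel hk],
          sum_Icc_succ_top (by omega), Nat.sub_add_cancel hk, hTk]
        congr 1
        · refine sum_congr rfl fun i hi => ?_
          have hi' := mem_Icc.mp hi
          rw [hT i hi'.1 (by omega), nsmul_eq_mul]
        · simp
    _ = ∑ s, ∑ j ∈ M s, ζ ^ (j * r) + k := by
        rw [sum_Icc_nsmul_sum_fiber hmult, sum_card_filter_mem_nsmul hMsub]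
    _ = ∑ s, (1 + ∑ j ∈ M s, ζ ^ (j * r)) := by
        rw [sum_add_distrib, add_comm]; simp
    _ = _ := sum_congr rfl fun s _ => by rw [hM s, hζ.one_add_sum_image_pow_mul hL (hdL s) r]

theorem stmt19 (k : ℕ) (d : Fin k → ℕ) (hd : ∀ i, 0 < d i)
    (hgcd : Finset.univ.gcd d = 1)
    (ζ : ℂ) (hζ : IsPrimitiveRoot ζ (Finset.univ.lcm d))
    (H : ℕ → ℕ)
    (hH : ∀ n, H n = Nat.card {a : Fin k → ℕ // ∑ i, a i * d i = n})
    (M : Fin k → Finset ℕ)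
    (hM : ∀ s, M s =
      (Finset.Icc 1 (d s - 1)).image (· * (Finset.univ.lcm d / d s)))
    (T : ℕ → Finset ℕ)
    (hT : ∀ i, 1 ≤ i → i < k → T i =
      (Finset.Icc 1 (Finset.univ.lcm d - 1)).filter
        (fun j => (Finset.univ.filter (fun s => j ∈ M s)).card = i))
    (hTk : T k = {0})
    (n : ℕ) (hn : 1 ≤ n) :
    (H n : ℂ) = (1 / n) *
      ∑ r ∈ Finset.Icc 1 n,
        (∑ i ∈ Finset.Icc 1 k, (i : ℂ) * ∑ j ∈ T i, ζ ^ (j * r)) * H (n - r) := by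
  have hHsol : ∀ m, H m = #(WeightedPartition.solutions d m) := fun m => by
    rw [hH, WeightedPartition.card_solutions hd]
  have hrec : (n : ℂ) * H n =
      ∑ r ∈ Icc 1 n, (∑ s, if d s ∣ r then (d s : ℂ) else 0) * H (n - r) := by
    simp only [hHsol]
    exact_mod_cast WeightedPartition.mul_card_solutions hd n
  have hn0 : (n : ℂ) ≠ 0 := Nat.cast_ne_zero.mpr (by omega)
  simp only [sum_Icc_mul_sum_pow_eq_sum_ite_dvd k d hd hgcd ζ hζ M hM T hT hTk, ← hrec]
  field_simp
end
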